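/- Let Q be a collection of partial partitions of a finite set X. There is a bijection between the minimal restricted chordal completions of int(Q) and the minimal chordal sandwiches of (int*(Q), forb(Q)). -/

import Mathlib

open SimpleGraph

/-- `f : ZMod n → V` traces an induced cycle of length `n` in `G`:
`f` is injective and adjacency holds exactly between consecutive vertices. -/
def IsInducedCycle {V : Type*} (G : SimpleGraph V) (n : ℕ) (f : ZMod n → V) : Prop :=
  Function.Injective f ∧ ∀ i j : ZMod n, G.Adj (f i) (f j) ↔ (j = i + 1 ∨ i = j + 1)

/-- A graph is chordal if it has no induced cycle of length at least 4. -/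
def Chordal {V : Type*} (G : SimpleGraph V) : Prop :=
  ∀ n, 4 ≤ n → ∀ f : ZMod n → V, ¬ IsInducedCycle G n f

/-- `G'` is a chordal completion of `G`. -/
def ChordalCompletion {V : Type*} (G G' : SimpleGraph V) : Prop :=
  Chordal G' ∧ G ≤ G'

/-- Minimal chordal completion: no proper spanning subgraph containing `G` is chordal. -/
def MinimalChordalCompletion {V : Type*} (G G' : SimpleGraph V) : Prop :=
  ChordalCompletion G G' ∧ ∀ H, ChordalCompletion G H → H ≤ G' → H = G'

/-- A chordal sandwich of `(G₁, G₂)`: a chordal graph containing all edges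
of `G₁` and no edge of `G₂`. -/
def ChordalSandwich {V : Type*} (G₁ G₂ G' : SimpleGraph V) : Prop :=
  Chordal G' ∧ G₁ ≤ G' ∧ ∀ u v : V, G'.Adj u v → ¬ G₂.Adj u v

/-- Minimal chordal sandwich: no proper spanning subgraph is a chordal sandwich. -/
def MinimalChordalSandwich {V : Type*} (G₁ G₂ G' : SimpleGraph V) : Prop :=
  ChordalSandwich G₁ G₂ G' ∧ ∀ H, ChordalSandwich G₁ G₂ H → H ≤ G' → H = G'

/-- A partial partition of `X`, given as its set of cells: nonempty,
pairwise disjoint cells, at least two of them. -/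
def IsPartialPartition {X : Type*} (π : Set (Set X)) : Prop :=
  (∀ A ∈ π, A.Nonempty) ∧ (π.Pairwise fun A B => A ∩ B = ∅) ∧ π.Nontrivial

/-- Vertices of the partial partition intersection graph: pairs `(A, π)`
with `π ∈ Q` and `A` a cell of `π`. -/
def IntVert {X : Type*} (Q : Set (Set (Set X))) : Type _ :=
  {p : Set X × Set (Set X) // p.2 ∈ Q ∧ p.1 ∈ p.2}

/-- Cells of members of `Q`, the vertices of the cell intersection graph. -/
def Cell {X : Type*} (Q : Set (Set (Set X))) : Type _ :=
  {A : Set X // ∃ π ∈ Q, A ∈ π}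

/-- The partial partition intersection graph `int(Q)`. -/
def intGraph {X : Type*} (Q : Set (Set (Set X))) : SimpleGraph (IntVert Q) where
  Adj p q := p ≠ q ∧ (p.1.1 ∩ q.1.1).Nonempty
  symm := by
    constructor
    rintro p q ⟨h1, h2⟩
    exact ⟨h1.symm, by rwa [Set.inter_comm]⟩
  loopless := by constructor; rintro p ⟨h1, _⟩; exact h1 rfl

/-- The cell intersection graph `int*(Q)`. -/
def intStarGraph {X : Type*} (Q : Set (Set (Set X))) : SimpleGraph (Cell Q) where
  Adj A B := A.1 ≠ B.1 ∧ (A.1 ∩ B.1).Nonempty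
  symm := by
    constructor
    rintro A B ⟨h1, h2⟩
    exact ⟨h1.symm, by rwa [Set.inter_comm]⟩
  loopless := by constructor; rintro A ⟨h1, _⟩; exact h1 rfl

/-- The graph `forb(Q)`: two cells are adjacent iff they are distinct cells
of a common partial partition of `Q`. -/
def forbGraph {X : Type*} (Q : Set (Set (Set X))) : SimpleGraph (Cell Q) where
  Adj A B := A.1 ≠ B.1 ∧ ∃ π ∈ Q, A.1 ∈ π ∧ B.1 ∈ π
  symm := by
    constructor
    rintro A B ⟨h1, π, hπ, hA, hB⟩
    exact ⟨h1.symm, π, hπ, hB, hA⟩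
  loopless := by constructor; rintro A ⟨h1, _⟩; exact h1 rfl

/-- A restricted chordal completion of `int(Q)`: a chordal completion in which
distinct cells of a common partial partition stay non-adjacent. -/
def RestrictedChordalCompletion {X : Type*} (Q : Set (Set (Set X)))
    (G' : SimpleGraph (IntVert Q)) : Prop :=
  ChordalCompletion (intGraph Q) G' ∧
    ∀ p q : IntVert Q, p.1.2 = q.1.2 → p.1.1 ≠ q.1.1 → ¬ G'.Adj p q

def MinimalRestrictedChordalCompletion {X : Type*} (Q : Set (Set (Set X)))
    (G' : SimpleGraph (IntVert Q)) : Prop :=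
  RestrictedChordalCompletion Q G' ∧
    ∀ H, RestrictedChordalCompletion Q H → H ≤ G' → H = G'

/-!
Lifting a graph `H` on the cells of `Q` to the vertices `(A, π)` of `int(Q)` (every cell becomes
a clique, and two vertices in different cells are adjacent iff their cells are adjacent in `H`)
is an order embedding. It preserves and reflects chordality, sends `int*(Q)` to `int(Q)`
(cells are nonempty), and sends exactly the chordal sandwiches of `(int*(Q), forb(Q))` to
restricted chordal completions of `int(Q)`. Conversely every restricted chordal completion `G'`
contains the lift of its quotient (two cells adjacent iff all their vertices are adjacent in
`G'`), and that lift is again a restricted chordal completion. So the minimal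
restricted chordal completions are exactly the lifts of the minimal chordal sandwiches.

The only graph-theoretic input is that the quotient of a chordal graph is chordal. An induced
cycle of length `n ≥ 4` in the quotient gives classes `C 0, …, C (n-1)` of vertices, complete
between consecutive classes and not complete between the others. Take a clique separating a
non-edge `u ∈ C 0`, `w ∈ C 2` (Dirac: minimal separators of chordal graphs are cliques). It
contains `C 1`, so it cannot contain any other whole class, and the classes `C 3, …, C (n-1)`
then connect `w` back to `u` around it.
-/

theorem ZMod.natCast_ne_natCast_of_lt {n a b : ℕ} (ha : a < n) (hb : b < n) (hab : a ≠ b) :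
    (a : ZMod n) ≠ b := by
  rwa [Ne, ZMod.natCast_eq_natCast_iff', Nat.mod_eq_of_lt ha, Nat.mod_eq_of_lt hb]

theorem ZMod.eq_add_one_iff_val {n : ℕ} [NeZero n] (i j : ZMod n) :
    j = i + 1 ↔ j.val = (i.val + 1) % n := by
  rw [← (ZMod.val_injective n).eq_iff, ZMod.val_add, ZMod.val_one_eq_one_mod, Nat.add_mod_mod]

namespace SimpleGraph

variable {V : Type*} {G : SimpleGraph V} {s t : Set V} {u v w x y : V}

def restrict (G : SimpleGraph V) (s : Set V) : SimpleGraph V where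
  Adj a b := G.Adj a b ∧ a ∈ s ∧ b ∈ s
  symm := ⟨fun _ _ h => ⟨h.1.symm, h.2.2, h.2.1⟩⟩
  loopless := ⟨fun _ h => G.loopless.irrefl _ h.1⟩

@[simp]
theorem restrict_adj {a b : V} : (G.restrict s).Adj a b ↔ G.Adj a b ∧ a ∈ s ∧ b ∈ s := Iff.rfl

theorem restrict_mono (h : s ⊆ t) : G.restrict s ≤ G.restrict t :=
  fun _ _ hab => ⟨hab.1, h hab.2.1, h hab.2.2⟩

theorem Reachable.mem_of_restrict (h : (G.restrict s).Reachable u v) (hu : u ∈ s) : v ∈ s := by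
  rw [reachable_iff_reflTransGen] at h
  induction h with
  | refl => exact hu
  | tail _ hbc _ => exact hbc.2.2

theorem Reachable.restrict_setOf_reachable (h : (G.restrict s).Reachable u v) :
    (G.restrict {z | (G.restrict s).Reachable u z}).Reachable u v := by
  rw [reachable_iff_reflTransGen] at h ⊢
  induction h with
  | refl => rfl
  | tail hab hbc ih =>
    rw [← reachable_iff_reflTransGen] at hab
    exact ih.tail ⟨hbc.1, hab, hab.trans hbc.reachable⟩

theorem Walk.getVert_mem_of_restrict :
    ∀ {u v : V} (p : (G.restrict s).Walk u v), u ∈ s → ∀ i, p.getVert i ∈ s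
  | _, _, .nil, hu, _ => by simpa using hu
  | _, _, .cons _ _, hu, 0 => by simpa using hu
  | _, _, .cons h q, _, i + 1 => by simpa using q.getVert_mem_of_restrict h.2.2 i

theorem not_reachable_restrict_pair (hne : u ≠ w) (hadj : ¬ G.Adj u w) :
    ¬ (G.restrict {u, w}).Reachable u w := fun ⟨p⟩ => by
  obtain ⟨d, -, hd₁, hd₂⟩ := p.exists_boundary_dart {u} rfl (by simpa using hne.symm)
  obtain ⟨hd, -, hd₃⟩ := d.adj
  simp only [Set.mem_insert_iff, Set.mem_singleton_iff] at hd₁ hd₂ hd₃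
  rw [hd₁, hd₃.resolve_left hd₂] at hd
  exact hadj hd

theorem ne_and_not_adj_of_not_reachable_restrict (hu : u ∈ s) (hw : w ∈ s)
    (hs : ¬ (G.restrict s).Reachable u w) {a b : V} (ha : (G.restrict s).Reachable u a)
    (hb : (G.restrict s).Reachable w b) : a ≠ b ∧ ¬ G.Adj a b := by
  refine ⟨fun he => hs (ha.trans (he ▸ hb.symm)), fun hab => hs ?_⟩
  have hab' : (G.restrict s).Adj a b := ⟨hab, ha.mem_of_restrict hu, hb.mem_of_restrict hw⟩
  exact ha.trans (hab'.reachable.trans hb.symm)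

theorem exists_adj_of_reachable_restrict_insert (hu : u ∈ s)
    (hs : ¬ (G.restrict s).Reachable u w) (hx : (G.restrict (insert x s)).Reachable u w) :
    ∃ a, (G.restrict s).Reachable u a ∧ G.Adj a x := by
  obtain ⟨p⟩ := hx
  obtain ⟨d, -, hd₁, hd₂⟩ :=
    p.exists_boundary_dart {z | (G.restrict s).Reachable u z} (Reachable.refl u) hs
  have hd := d.adj
  by_cases hdx : d.snd = x
  · rw [hdx] at hd
    exact ⟨d.fst, hd₁, hd.1⟩
  · have hd' : (G.restrict s).Adj d.fst d.snd :=
      ⟨hd.1, hd₁.mem_of_restrict hu, hd.2.2.resolve_left hdx⟩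
    exact (hd₂ (hd₁.trans hd'.reachable)).elim

theorem reachable_restrict_insert_insert (hu : u ∈ s) (hs : ¬ (G.restrict s).Reachable u w)
    (hx : (G.restrict (insert x s)).Reachable u w) (hy : (G.restrict (insert y s)).Reachable u w) :
    (G.restrict (insert x (insert y {z | (G.restrict s).Reachable u z}))).Reachable x y := by
  obtain ⟨a, ha, hax⟩ := exists_adj_of_reachable_restrict_insert hu hs hx
  obtain ⟨b, hb, hby⟩ := exists_adj_of_reachable_restrict_insert hu hs hy
  have hxa : (G.restrict (insert x (insert y {z | (G.restrict s).Reachable u z}))).Adj x a := by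
    simp [hax.symm, ha]
  have hby' : (G.restrict (insert x (insert y {z | (G.restrict s).Reachable u z}))).Adj b y := by
    simp [hby, hb]
  have hab := ha.restrict_setOf_reachable.symm.trans hb.restrict_setOf_reachable
  refine hxa.reachable.trans ((hab.mono (restrict_mono ?_)).trans hby'.reachable)
  exact (Set.subset_insert _ _).trans (Set.subset_insert _ _)

theorem reachable_restrict_of_consecutive {n : ℕ} {C : ZMod n → Set V}
    (hcons : ∀ i, ∀ a ∈ C i, ∀ b ∈ C (i + 1), G.Adj a b) {j k : ℕ} (hjk : j < k)
    (hmeet : ∀ l, j < l → l < k → (C l ∩ s).Nonempty) (hx : x ∈ C j ∩ s) (hy : y ∈ C k ∩ s) :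
    (G.restrict s).Reachable x y := by
  induction k, hjk using Nat.le_induction generalizing y with
  | base =>
    have hxy : (G.restrict s).Adj x y :=
      ⟨hcons j x hx.1 y (by rw [← Nat.cast_add_one]; exact hy.1), hx.2, hy.2⟩
    exact hxy.reachable
  | succ k hk ih =>
    obtain ⟨z, hz⟩ := hmeet k hk (by omega)
    have hzy : (G.restrict s).Adj z y :=
      ⟨hcons k z hz.1 y (by rw [← Nat.cast_add_one]; exact hy.1), hz.2, hy.2⟩
    exact (ih (fun l hl hlk => hmeet l hl (by omega)) hz).trans hzy.reachable

theorem Walk.adj_getVert_of_length_eq_dist {p : G.Walk u v} (hp : p.length = G.dist u v)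
    {i j : ℕ} (hij : i ≤ j) (hj : j ≤ p.length) (h : G.Adj (p.getVert i) (p.getVert j)) :
    j = i + 1 := by
  have hsub : ((p.drop i).take (j - i)).IsSubwalk p :=
    (isSubwalk_take _ _).trans (isSubwalk_drop _ _)
  have hlen := length_eq_dist_of_subwalk hp hsub
  rw [take_length, drop_length, drop_getVert, Nat.add_sub_cancel' hij,
    dist_eq_one_iff_adj.2 h] at hlen
  omega

end SimpleGraph

open SimpleGraph

section Chordal

variable {V : Type*} {G : SimpleGraph V}

def IsInducedPath (G : SimpleGraph V) (a : ℕ → V) (m : ℕ) : Prop :=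
  Set.InjOn a (Set.Iic m) ∧ ∀ i j, i < j → j ≤ m → (G.Adj (a i) (a j) ↔ j = i + 1)

theorem IsInducedPath.two_le {a : ℕ → V} {k : ℕ} (ha : IsInducedPath G a k) (hne : a 0 ≠ a k)
    (hadj : ¬ G.Adj (a 0) (a k)) : 2 ≤ k := by
  by_contra! hk
  interval_cases k
  · exact hne rfl
  · exact hadj ((ha.2 0 1 one_pos le_rfl).2 rfl)

theorem SimpleGraph.Walk.isInducedPath_getVert {u v : V} {p : G.Walk u v}
    (hp : p.length = G.dist u v) : IsInducedPath G p.getVert p.length :=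
  ⟨(p.isPath_of_length_eq_dist hp).getVert_injOn, fun _ _ hij hj =>
    ⟨adj_getVert_of_length_eq_dist hp hij.le hj, by rintro rfl; exact p.adj_getVert_succ hj⟩⟩

theorem exists_isInducedPath_of_reachable_restrict {x y : V} {A : Set V}
    (h : (G.restrict (insert x (insert y A))).Reachable x y) :
    ∃ a m, IsInducedPath G a m ∧ a 0 = x ∧ a m = y ∧ ∀ i, 0 < i → i < m → a i ∈ A := by
  obtain ⟨p, hp⟩ := h.exists_walk_length_eq_dist
  have hmem := p.getVert_mem_of_restrict (Set.mem_insert _ _)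
  obtain ⟨hinj, hadj⟩ := p.isInducedPath_getVert hp
  refine ⟨p.getVert, p.length, ⟨hinj, fun i j hij hj => ?_⟩, p.getVert_zero, p.getVert_length,
    fun i hi him => ?_⟩
  · rw [← hadj i j hij hj]
    exact ⟨fun hG => ⟨hG, hmem i, hmem j⟩, fun hr => hr.1⟩
  · have hx : p.getVert i ≠ x := fun he => hi.ne' <|
      hinj (Set.mem_Iic.2 him.le) (Set.mem_Iic.2 (Nat.zero_le _)) (he.trans p.getVert_zero.symm)
    have hy : p.getVert i ≠ y := fun he => him.ne <|
      hinj (Set.mem_Iic.2 him.le) (Set.mem_Iic.2 le_rfl) (he.trans p.getVert_length.symm)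
    simpa [hx, hy] using hmem i

theorem Chordal.comap (hG : Chordal G) {W : Type*} {f : W → V} (hf : f.Injective) :
    Chordal (G.comap f) :=
  fun n hn c ⟨hinj, hadj⟩ => hG n hn (f ∘ c) ⟨hf.comp hinj, hadj⟩

theorem Chordal.false_of_natCycle (hG : Chordal G) {n : ℕ} (hn : 4 ≤ n) {c : ℕ → V}
    (hne : ∀ i j, i < j → j < n → c i ≠ c j)
    (hadj : ∀ i j, i < j → j < n → (G.Adj (c i) (c j) ↔ j = i + 1 ∨ (i = 0 ∧ j = n - 1))) :
    False := by
  have : NeZero n := ⟨by omega⟩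
  have hsucc : ∀ a < n, (a + 1) % n = if a + 1 = n then 0 else a + 1 := by
    intro a ha
    split_ifs with h
    · rw [h, Nat.mod_self]
    · exact Nat.mod_eq_of_lt (by omega)
  refine hG n hn (fun i => c i.val) ⟨fun i j he => ?_, fun i j => ?_⟩
  · by_contra hij
    rcases Nat.lt_or_gt_of_ne fun h => hij (ZMod.val_injective n h) with h | h
    · exact hne _ _ h j.val_lt he
    · exact hne _ _ h i.val_lt he.symm
  rw [ZMod.eq_add_one_iff_val, ZMod.eq_add_one_iff_val, hsucc _ i.val_lt, hsucc _ j.val_lt]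
  have := i.val_lt
  have := j.val_lt
  rcases lt_trichotomy i.val j.val with h | h | h
  · rw [hadj _ _ h j.val_lt]; split_ifs <;> omega
  · simp only [h, G.irrefl, false_iff]; split_ifs <;> omega
  · rw [G.adj_comm, hadj _ _ h i.val_lt]; split_ifs <;> omega

theorem Chordal.false_of_isInducedPath_pair (hG : Chordal G) {a b : ℕ → V} {k m : ℕ}
    (ha : IsInducedPath G a k) (hb : IsInducedPath G b m) (hk : 2 ≤ k) (hm : 2 ≤ m)
    (h0 : a 0 = b 0) (hend : a k = b m)
    (hsep : ∀ i j, 0 < i → i < k → 0 < j → j < m → a i ≠ b j ∧ ¬ G.Adj (a i) (b j)) :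
    False := by
  set c : ℕ → V := fun t => if t ≤ k then a t else b (k + m - t)
  have hc_left : ∀ t ≤ k, c t = a t := fun t ht => if_pos ht
  have hc_right : ∀ t, k ≤ t → c t = b (k + m - t) := by
    intro t ht
    rcases ht.eq_or_lt with rfl | ht
    · simp [c, hend]
    · exact if_neg (by omega)
  have key : ∀ i j, i < j → j < k + m →
      c i ≠ c j ∧ (G.Adj (c i) (c j) ↔ j = i + 1 ∨ (i = 0 ∧ j = k + m - 1)) := by
    intro i j hij hj
    by_cases hjk : j ≤ k
    · rw [hc_left i (by omega), hc_left j hjk, ha.2 i j hij hjk]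
      exact ⟨fun he => hij.ne (ha.1 (Set.mem_Iic.2 (by omega)) (Set.mem_Iic.2 hjk) he),
        by omega⟩
    by_cases hki : k ≤ i
    · rw [hc_right i hki, hc_right j (by omega), G.adj_comm, hb.2 _ _ (by omega) (by omega)]
      refine ⟨fun he => ?_, by omega⟩
      have := hb.1 (Set.mem_Iic.2 (by omega)) (Set.mem_Iic.2 (by omega)) he
      omega
    rw [hc_left i (by omega), hc_right j (by omega)]
    rcases Nat.eq_zero_or_pos i with rfl | hi
    · rw [h0, hb.2 0 _ (by omega) (by omega)]
      refine ⟨fun he => ?_, by omega⟩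
      have := hb.1 (Set.mem_Iic.2 (by omega)) (Set.mem_Iic.2 (by omega)) he
      omega
    · obtain ⟨hne, hnadj⟩ := hsep i (k + m - j) hi (by omega) (by omega) (by omega)
      exact ⟨hne, by simp only [hnadj, false_iff]; omega⟩
  exact hG.false_of_natCycle (by omega) (fun i j hij hj => (key i j hij hj).1)
    fun i j hij hj => (key i j hij hj).2

theorem Chordal.exists_isClique_separator [Finite V] (hG : Chordal G) {u w : V} (hne : u ≠ w)
    (hadj : ¬ G.Adj u w) :
    ∃ S : Set V, u ∉ S ∧ w ∉ S ∧ ¬ (G.restrict Sᶜ).Reachable u w ∧ G.IsClique S := by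
  let P : Set V → Prop := fun S => u ∉ S ∧ w ∉ S ∧ ¬ (G.restrict Sᶜ).Reachable u w
  have hP : P {u, w}ᶜ :=
    ⟨by simp, by simp, by rw [compl_compl]; exact not_reachable_restrict_pair hne hadj⟩
  obtain ⟨S, -, hSmin⟩ := exists_minimal_le_of_wellFoundedLT P _ hP
  obtain ⟨huS, hwS, hsep⟩ := hSmin.1
  have hreach : ∀ x ∈ S, (G.restrict (insert x Sᶜ)).Reachable u w := by
    intro x hx
    by_contra h
    have hP' : P (S \ {x}) := ⟨fun h' => huS h'.1, fun h' => hwS h'.1, by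
      rwa [Set.compl_sdiff, ← Set.insert_eq]⟩
    exact (hSmin.2 hP' Set.sdiff_subset hx).2 rfl
  refine ⟨S, huS, hwS, hsep, fun x hx y hy hxy => ?_⟩
  by_contra hxy'
  -- an induced `x`–`y` path through the component of `u` and one through that of `w`
  obtain ⟨a, k, ha, ha₀, hak, haR⟩ := exists_isInducedPath_of_reachable_restrict
    (reachable_restrict_insert_insert huS hsep (hreach x hx) (hreach y hy))
  obtain ⟨b, m, hb, hb₀, hbm, hbR⟩ := exists_isInducedPath_of_reachable_restrict
    (reachable_restrict_insert_insert hwS (fun h => hsep h.symm) (hreach x hx).symm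
      (hreach y hy).symm)
  exact hG.false_of_isInducedPath_pair ha hb (ha.two_le (by rwa [ha₀, hak]) (by rwa [ha₀, hak]))
    (hb.two_le (by rwa [hb₀, hbm]) (by rwa [hb₀, hbm])) (ha₀.trans hb₀.symm) (hak.trans hbm.symm)
    fun i j hi hik hj hjm =>
      ne_and_not_adj_of_not_reachable_restrict huS hwS hsep (haR i hi hik) (hbR j hj hjm)

theorem Chordal.false_of_cyclic_classes [Finite V] (hG : Chordal G) {n : ℕ} (hn : 4 ≤ n)
    {C : ZMod n → Set V} (hdisj : Pairwise fun i j => Disjoint (C i) (C j))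
    (hcons : ∀ i, ∀ a ∈ C i, ∀ b ∈ C (i + 1), G.Adj a b)
    (hfar : ∀ i j, i ≠ j → j ≠ i + 1 → i ≠ j + 1 → ∃ a ∈ C i, ∃ b ∈ C j, ¬ G.Adj a b) :
    False := by
  have : NeZero n := ⟨by omega⟩
  have hcast : ∀ {a b : ℕ}, a < n → b < n → a ≠ b → (a : ZMod n) ≠ b :=
    ZMod.natCast_ne_natCast_of_lt
  have h02 : (0 : ZMod n) ≠ 2 := by
    exact_mod_cast hcast (a := 0) (b := 2) (by omega) (by omega) (by omega)
  obtain ⟨u, hu, w, hw, huw⟩ := hfar 0 2 h02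
    (by rw [zero_add]; exact_mod_cast hcast (a := 2) (b := 1) (by omega) (by omega) (by omega))
    (by norm_num; exact_mod_cast hcast (a := 0) (b := 3) (by omega) (by omega) (by omega))
  obtain ⟨S, huS, hwS, hsep, hS⟩ := hG.exists_isClique_separator
    (fun (h : u = w) => Set.disjoint_left.1 (hdisj h02) hu (h ▸ hw)) huw
  have hC₁ : C 1 ⊆ S := by
    intro c hc
    by_contra hcS
    have huc : (G.restrict Sᶜ).Adj u c := ⟨hcons 0 u hu c (by rwa [zero_add]), huS, hcS⟩
    have hcw : (G.restrict Sᶜ).Adj c w :=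
      ⟨hcons 1 c hc w (by rwa [one_add_one_eq_two]), hcS, hwS⟩
    exact hsep (huc.reachable.trans hcw.reachable)
  -- `C 1 ⊆ S` is not complete to `C l`, so the clique `S` cannot contain `C l`
  have hmeet : ∀ l, 2 < l → l < n → (C l ∩ Sᶜ).Nonempty := by
    intro l hl hln
    by_contra h
    have hl' : (1 : ZMod n) ≠ l := by
      exact_mod_cast hcast (a := 1) (b := l) (by omega) hln (by omega)
    obtain ⟨a, ha, b, hb, hab⟩ := hfar 1 l hl'
      (by rw [one_add_one_eq_two]; exact_mod_cast hcast (a := l) (b := 2) hln (by omega) (by omega))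
      (fun h => hcast (a := l) (b := 0) hln (by omega) (by omega) (by simpa [eq_comm] using h))
    have hbS : b ∈ S := by_contra fun hbS => h ⟨b, hb, hbS⟩
    exact hab (hS (hC₁ ha) hbS fun h => Set.disjoint_left.1 (hdisj hl') ha (h ▸ hb))
  exact hsep (reachable_restrict_of_consecutive hcons (j := 2) (k := n) (by omega) hmeet
    ⟨by exact_mod_cast hw, hwS⟩ ⟨by rwa [ZMod.natCast_self], huS⟩).symm

end Chordal

namespace OrderEmbedding

variable {α β : Type*} [PartialOrder α] [PartialOrder β] (f : α ↪o β) {P : β → Prop}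

theorem minimal_apply_iff_of_forall_exists_le (hP : ∀ y, P y → ∃ x, P (f x) ∧ f x ≤ y) {x : α} :
    Minimal P (f x) ↔ Minimal (fun x => P (f x)) x := by
  refine ⟨fun h => ⟨h.1, fun y hy hyx => ?_⟩, fun h => ⟨h.1, fun y hy hyx => ?_⟩⟩
  · rw [← f.le_iff_le] at hyx ⊢
    exact h.2 hy hyx
  · obtain ⟨z, hz, hzy⟩ := hP y hy
    exact (f.le_iff_le.2 (h.2 hz (f.le_iff_le.1 (hzy.trans hyx)))).trans hzy

theorem exists_apply_eq_of_minimal (hP : ∀ y, P y → ∃ x, P (f x) ∧ f x ≤ y) {y : β}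
    (hy : Minimal P y) : ∃ x, f x = y :=
  let ⟨x, hx, hxy⟩ := hP y hy.1
  ⟨x, hy.eq_of_le hx hxy⟩

noncomputable def minimalEquiv (hP : ∀ y, P y → ∃ x, P (f x) ∧ f x ≤ y) :
    {x // Minimal (fun x => P (f x)) x} ≃ {y // Minimal P y} :=
  Equiv.ofBijective (fun x => ⟨f x, (f.minimal_apply_iff_of_forall_exists_le hP).2 x.2⟩)
    ⟨fun _ _ h => Subtype.ext (f.injective (congrArg Subtype.val h)), fun y => by
      obtain ⟨x, hx⟩ := f.exists_apply_eq_of_minimal hP y.2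
      exact ⟨⟨x, (f.minimal_apply_iff_of_forall_exists_le hP).1 (hx ▸ y.2)⟩, Subtype.ext hx⟩⟩

end OrderEmbedding

theorem minimalChordalSandwich_iff {V : Type*} {G₁ G₂ H : SimpleGraph V} :
    MinimalChordalSandwich G₁ G₂ H ↔ Minimal (ChordalSandwich G₁ G₂) H :=
  minimal_iff.trans (.and .rfl (forall₃_congr fun _ _ _ => eq_comm)) |>.symm

theorem minimalRestrictedChordalCompletion_iff {X : Type*} {Q : Set (Set (Set X))}
    {G' : SimpleGraph (IntVert Q)} :
    MinimalRestrictedChordalCompletion Q G' ↔ Minimal (RestrictedChordalCompletion Q) G' :=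
  minimal_iff.trans (.and .rfl (forall₃_congr fun _ _ _ => eq_comm)) |>.symm

instance {X : Type*} [Finite X] {Q : Set (Set (Set X))} : Finite (IntVert Q) :=
  inferInstanceAs (Finite {p : Set X × Set (Set X) // p.2 ∈ Q ∧ p.1 ∈ p.2})

namespace IntVert

variable {X : Type*} {Q : Set (Set (Set X))}

def cell (p : IntVert Q) : Cell Q := ⟨p.1.1, p.1.2, p.2.1, p.2.2⟩

theorem cell_surjective : Function.Surjective (cell (Q := Q)) :=
  fun ⟨A, π, hπ, hA⟩ => ⟨⟨(A, π), hπ, hA⟩, rfl⟩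

theorem cell_eq_cell {p q : IntVert Q} : p.cell = q.cell ↔ p.1.1 = q.1.1 := Subtype.ext_iff

end IntVert

section Cells

variable {X : Type*} (Q : Set (Set (Set X)))

open IntVert

def cellLift (H : SimpleGraph (Cell Q)) : SimpleGraph (IntVert Q) where
  Adj p q := p ≠ q ∧ (p.cell = q.cell ∨ H.Adj p.cell q.cell)
  symm := ⟨fun _ _ h => ⟨h.1.symm, h.2.imp Eq.symm SimpleGraph.Adj.symm⟩⟩
  loopless := ⟨fun _ h => h.1 rfl⟩

def cellPush (G' : SimpleGraph (IntVert Q)) : SimpleGraph (Cell Q) where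
  Adj A B := A ≠ B ∧ ∀ p q : IntVert Q, p.cell = A → q.cell = B → G'.Adj p q
  symm := ⟨fun _ _ h => ⟨h.1.symm, fun p q hp hq => (h.2 q p hq hp).symm⟩⟩
  loopless := ⟨fun _ h => h.1 rfl⟩

variable {Q} {H H₁ H₂ : SimpleGraph (Cell Q)} {G' : SimpleGraph (IntVert Q)}

theorem cellLift_adj {p q : IntVert Q} :
    (cellLift Q H).Adj p q ↔ p ≠ q ∧ (p.cell = q.cell ∨ H.Adj p.cell q.cell) := Iff.rfl

theorem cellPush_adj {A B : Cell Q} :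
    (cellPush Q G').Adj A B ↔ A ≠ B ∧ ∀ p q : IntVert Q, p.cell = A → q.cell = B → G'.Adj p q :=
  Iff.rfl

theorem cellLift_adj_iff_of_cell_ne {p q : IntVert Q} (h : p.cell ≠ q.cell) :
    (cellLift Q H).Adj p q ↔ H.Adj p.cell q.cell :=
  ⟨fun hpq => hpq.2.resolve_left h, fun hpq => ⟨fun he => h (he ▸ rfl), Or.inr hpq⟩⟩

theorem cellLift_le_cellLift : cellLift Q H₁ ≤ cellLift Q H₂ ↔ H₁ ≤ H₂ := by
  refine ⟨fun h A B hAB => ?_, fun h p q hpq => ⟨hpq.1, hpq.2.imp_right fun hH => h hH⟩⟩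
  obtain ⟨p, rfl⟩ := cell_surjective A
  obtain ⟨q, rfl⟩ := cell_surjective B
  exact (cellLift_adj_iff_of_cell_ne hAB.ne).1 (h ((cellLift_adj_iff_of_cell_ne hAB.ne).2 hAB))

theorem cellLift_intStarGraph (hQ : ∀ π ∈ Q, ∀ A ∈ π, A.Nonempty) :
    cellLift Q (intStarGraph Q) = intGraph Q := by
  ext p q
  refine ⟨fun ⟨hpq, h⟩ => ⟨hpq, ?_⟩, fun ⟨hpq, h⟩ => ⟨hpq, ?_⟩⟩
  · rcases h with h | h
    · rw [cell_eq_cell.1 h, Set.inter_self]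
      exact hQ _ q.2.1 _ q.2.2
    · exact h.2
  · by_cases hc : p.cell = q.cell
    · exact Or.inl hc
    · exact Or.inr ⟨fun he => hc (cell_eq_cell.2 he), h⟩

theorem Chordal.of_cellLift (h : Chordal (cellLift Q H)) : Chordal H := by
  have hs := Function.rightInverse_surjInv (cell_surjective (Q := Q))
  have hH : (cellLift Q H).comap (Function.surjInv cell_surjective) = H := by
    ext A B
    rw [SimpleGraph.comap_adj, cellLift_adj, hs A, hs B]
    exact ⟨fun h => h.2.resolve_left fun he => h.1 (congrArg _ he), fun h =>
      ⟨fun he => h.ne (by rw [← hs A, he, hs B]), Or.inr h⟩⟩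
  exact hH ▸ h.comap (Function.injective_surjInv _)

theorem IsInducedCycle.of_cellLift {n : ℕ} (hn : 4 ≤ n) {f : ZMod n → IntVert Q}
    (hf : IsInducedCycle (cellLift Q H) n f) : IsInducedCycle H n fun i => (f i).cell := by
  obtain ⟨hinj, hadj⟩ := hf
  have : NeZero n := ⟨by omega⟩
  have hcast : ∀ {a b : ℕ}, a < n → b < n → a ≠ b → (a : ZMod n) ≠ b :=
    ZMod.natCast_ne_natCast_of_lt
  -- two consecutive vertices of the cycle in one cell would make `f i` adjacent to `f (i + 2)`
  have hstep : ∀ i, (f i).cell ≠ (f (i + 1)).cell := by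
    intro i hi
    have h12 : (cellLift Q H).Adj (f (i + 1)) (f (i + 2)) := (hadj _ _).2 (Or.inl (by ring))
    have h02 : (cellLift Q H).Adj (f i) (f (i + 2)) := by
      refine ⟨fun he => ?_, hi ▸ h12.2⟩
      have := hinj he
      exact hcast (a := 2) (b := 0) (by omega) (by omega) (by omega)
        (by exact_mod_cast (by linear_combination -this : (2 : ZMod n) = 0))
    rcases (hadj _ _).1 h02 with h | h
    · exact hcast (a := 2) (b := 1) (by omega) (by omega) (by omega)
        (by exact_mod_cast (by linear_combination h : (2 : ZMod n) = 1))
    · exact hcast (a := 3) (b := 0) (by omega) (by omega) (by omega)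
        (by exact_mod_cast (by linear_combination -h : (3 : ZMod n) = 0))
  have hcell : ∀ i j, (f i).cell = (f j).cell → i = j := by
    intro i j he
    by_contra hij
    rcases (hadj i j).1 ⟨fun h => hij (hinj h), Or.inl he⟩ with rfl | rfl
    · exact hstep i he
    · exact hstep j he.symm
  refine ⟨fun i j he => hcell i j he, fun i j => ?_⟩
  by_cases hij : i = j
  · subst hij
    simp only [SimpleGraph.irrefl, false_iff]
    exact fun h => (cellLift Q H).irrefl ((hadj i i).2 h)
  · rw [← hadj, cellLift_adj_iff_of_cell_ne fun he => hij (hcell i j he)]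

theorem chordal_cellLift_iff : Chordal (cellLift Q H) ↔ Chordal H :=
  ⟨Chordal.of_cellLift, fun hH n hn _ hf => hH n hn _ (hf.of_cellLift hn)⟩

theorem Chordal.cellPush [Finite X] (hG' : Chordal G') : Chordal (cellPush Q G') := by
  intro n hn g ⟨hinj, hadj⟩
  refine hG'.false_of_cyclic_classes hn (C := fun i => {p | p.cell = g i})
    (fun i j hij => Set.disjoint_left.2 fun p hi hj => hij (hinj (hi.symm.trans hj)))
    (fun i p hp q hq => ((hadj i (i + 1)).2 (Or.inl rfl)).2 p q hp hq) fun i j hij hj hi => ?_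
  have h := mt (hadj i j).1 fun h => h.elim hj hi
  simp only [cellPush_adj, ne_eq, not_and, not_forall] at h
  obtain ⟨p, q, hp, hq, hpq⟩ := h fun he => hij (hinj he)
  exact ⟨p, hp, q, hq, hpq⟩

theorem forall_not_cellLift_adj_iff :
    (∀ p q : IntVert Q, p.1.2 = q.1.2 → p.1.1 ≠ q.1.1 → ¬ (cellLift Q H).Adj p q) ↔
      ∀ A B, H.Adj A B → ¬ (forbGraph Q).Adj A B := by
  refine ⟨fun h A B hAB ⟨hne, π, hπ, hA, hB⟩ => ?_, fun h p q hπ hne hpq => ?_⟩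
  · refine h ⟨(A.1, π), hπ, hA⟩ ⟨(B.1, π), hπ, hB⟩ rfl hne ⟨fun he => hne ?_, Or.inr hAB⟩
    exact congrArg (fun p : IntVert Q => p.1.1) he
  · rcases hpq.2 with hc | hadj
    · exact hne (cell_eq_cell.1 hc)
    · exact h _ _ hadj ⟨hne, p.1.2, p.2.1, p.2.2, hπ ▸ q.2.2⟩

theorem restrictedChordalCompletion_cellLift_iff (hQ : ∀ π ∈ Q, ∀ A ∈ π, A.Nonempty) :
    RestrictedChordalCompletion Q (cellLift Q H) ↔
      ChordalSandwich (intStarGraph Q) (forbGraph Q) H := by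
  rw [RestrictedChordalCompletion, ChordalCompletion, ChordalSandwich, chordal_cellLift_iff,
    forall_not_cellLift_adj_iff, ← cellLift_intStarGraph hQ, cellLift_le_cellLift, and_assoc]

theorem RestrictedChordalCompletion.chordalSandwich_cellPush [Finite X]
    (hG' : RestrictedChordalCompletion Q G') :
    ChordalSandwich (intStarGraph Q) (forbGraph Q) (cellPush Q G') := by
  obtain ⟨⟨hchordal, hint⟩, hres⟩ := hG'
  refine ⟨hchordal.cellPush, fun A B ⟨hne, hAB⟩ => ⟨fun he => hne (he ▸ rfl), ?_⟩, ?_⟩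
  · rintro p q rfl rfl
    exact hint ⟨fun he => hne (he ▸ rfl), hAB⟩
  · rintro A B ⟨-, hAB⟩ ⟨hne, π, hπ, hA, hB⟩
    exact hres ⟨(A.1, π), hπ, hA⟩ ⟨(B.1, π), hπ, hB⟩ rfl hne (hAB _ _ rfl rfl)

theorem cellLift_cellPush_le (hQ : ∀ π ∈ Q, ∀ A ∈ π, A.Nonempty) (h : intGraph Q ≤ G') :
    cellLift Q (cellPush Q G') ≤ G' := by
  rintro p q ⟨hne, hc | hpush⟩
  · exact h (cellLift_intStarGraph hQ ▸ ⟨hne, Or.inl hc⟩)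
  · exact hpush.2 p q rfl rfl

end Cells

theorem stmt_14 {X : Type*} [Fintype X] (Q : Set (Set (Set X)))
    (hQ : ∀ π ∈ Q, IsPartialPartition π) :
    Nonempty
      ({G' : SimpleGraph (IntVert Q) // MinimalRestrictedChordalCompletion Q G'} ≃
        {H : SimpleGraph (Cell Q) //
          MinimalChordalSandwich (intStarGraph Q) (forbGraph Q) H}) := by
  have hcells : ∀ π ∈ Q, ∀ A ∈ π, A.Nonempty := fun π hπ => (hQ π hπ).1
  let L : SimpleGraph (Cell Q) ↪o SimpleGraph (IntVert Q) :=
    OrderEmbedding.ofMapLEIff (cellLift Q) fun _ _ => cellLift_le_cellLift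
  have hdom : ∀ G', RestrictedChordalCompletion Q G' →
      ∃ H, RestrictedChordalCompletion Q (L H) ∧ L H ≤ G' := fun G' hG' =>
    ⟨cellPush Q G',
      (restrictedChordalCompletion_cellLift_iff hcells).2 hG'.chordalSandwich_cellPush,
      cellLift_cellPush_le hcells hG'.1.2⟩
  have hsandwich : (fun H => RestrictedChordalCompletion Q (L H)) =
      ChordalSandwich (intStarGraph Q) (forbGraph Q) :=
    funext fun _ => propext (restrictedChordalCompletion_cellLift_iff hcells)
  exact ⟨(Equiv.subtypeEquivRight fun _ => minimalRestrictedChordalCompletion_iff).trans <|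
    (L.minimalEquiv hdom).symm.trans <| Equiv.subtypeEquivRight fun _ => by
      rw [hsandwich, minimalChordalSandwich_iff]⟩
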